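/- arXiv:1911.12004 — 4 statements merged into one kernel-verified Lean document; each statement's English description precedes it below -/
import Mathlib

section
/- There exists a constant C > 1 such that for all n ≥ 1, C⁻¹ n^{−1/γ} ≤ rₙ ≤ C n^{−1/γ}, where (rₙ) is defined by r₀ = 1 and rₙ₊₁ + rₙ₊₁^{1+γ} = rₙ with rₙ₊₁ ∈ (0, rₙ). -/
/-!
Put `uₙ = rₙ ^ (-γ)` and `t = rₙ₊₁ ^ γ ∈ (0, 1]`. Since `rₙ = rₙ₊₁ (1 + t)`, the increment
`uₙ₊₁ - uₙ = (1 - (1 + t) ^ (-γ)) / t` lies between `γ / (2 (1 + γ))` and `γ`, as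
`(1 + t) ^ (-γ) = exp (-γ log (1 + t))` and `t / 2 ≤ log (1 + t) ≤ t`. Hence `uₙ` grows linearly
in `n`, and `rₙ = uₙ ^ (-1/γ)` is comparable to `n ^ (-1/γ)`.
-/

open Real

namespace Real

lemma one_sub_one_add_rpow_neg_le {γ t : ℝ} (hγ : 0 ≤ γ) (ht : 0 ≤ t) :
    1 - (1 + t) ^ (-γ) ≤ γ * t := by
  have hlog : log (1 + t) ≤ t := by linarith [log_le_sub_one_of_pos (by linarith : 0 < 1 + t)]
  rw [rpow_def_of_pos (by linarith)]
  nlinarith [add_one_le_exp (log (1 + t) * -γ), mul_le_mul_of_nonneg_left hlog hγ]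

lemma le_one_sub_one_add_rpow_neg {γ t : ℝ} (hγ : 0 ≤ γ) (ht : 0 ≤ t) (ht1 : t ≤ 1) :
    γ / (2 * (1 + γ)) * t ≤ 1 - (1 + t) ^ (-γ) := by
  set s := γ * log (1 + t)
  have hs_lower : γ * t / 2 ≤ s := by
    have hlog : t / 2 ≤ log (1 + t) :=
      calc t / 2 ≤ 2 * t / (t + 2) := by
            rw [div_le_div_iff₀ (by norm_num) (by linarith)]; nlinarith
        _ ≤ log (1 + t) := le_log_one_add_of_nonneg ht
    calc γ * t / 2 = γ * (t / 2) := by ring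
      _ ≤ s := mul_le_mul_of_nonneg_left hlog hγ
  have hs_upper : s ≤ γ := by
    have hlog : log (1 + t) ≤ 1 := by linarith [log_le_sub_one_of_pos (by linarith : 0 < 1 + t)]
    nlinarith
  have hs : 0 ≤ s := le_trans (by positivity) hs_lower
  have hexp : (1 + t) ^ (-γ) * (1 + s) ≤ 1 := by
    rw [rpow_def_of_pos (by linarith), show log (1 + t) * -γ = -s by ring]
    calc exp (-s) * (1 + s) ≤ exp (-s) * exp s := by gcongr; linarith [add_one_le_exp s]
      _ = 1 := by rw [← exp_add, neg_add_cancel, exp_zero]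
  calc γ / (2 * (1 + γ)) * t ≤ s / (1 + s) := by
        rw [div_mul_eq_mul_div, div_le_div_iff₀ (by positivity) (by positivity)]; nlinarith
    _ ≤ 1 - (1 + t) ^ (-γ) := by rw [div_le_iff₀ (by positivity)]; linarith

lemma rpow_neg_sub_rpow_neg_add_rpow_one_add_mem {γ a : ℝ} (hγ : 0 ≤ γ) (ha : 0 < a)
    (ha1 : a ≤ 1) :
    a ^ (-γ) - (a + a ^ (1 + γ)) ^ (-γ) ∈ Set.Icc (γ / (2 * (1 + γ))) γ := by
  set t := a ^ γ
  have ht : 0 < t := rpow_pos_of_pos ha γ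
  have ht1 : t ≤ 1 := rpow_le_one ha.le ha1 hγ
  have hincr : a ^ (-γ) - (a + a ^ (1 + γ)) ^ (-γ) = (1 - (1 + t) ^ (-γ)) / t := by
    rw [rpow_add ha, rpow_one, show a + a * t = a * (1 + t) by ring,
      mul_rpow ha.le (by positivity), rpow_neg ha.le]
    field_simp
    rfl
  rw [hincr, Set.mem_Icc, le_div_iff₀ ht, div_le_iff₀ ht]
  exact ⟨le_one_sub_one_add_rpow_neg hγ ht.le ht1, one_sub_one_add_rpow_neg_le hγ ht.le⟩

lemma le_rpow_neg_one_div_iff {γ x y : ℝ} (hγ : 0 < γ) (hx : 0 < x) (hy : 0 < y) :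
    x ≤ y ^ (-(1 / γ)) ↔ y ≤ x ^ (-γ) := by
  rw [one_div, ← inv_neg]
  exact le_rpow_inv_iff_of_neg hx hy (neg_lt_zero.2 hγ)

lemma rpow_neg_one_div_le_iff {γ x y : ℝ} (hγ : 0 < γ) (hx : 0 < x) (hy : 0 < y) :
    y ^ (-(1 / γ)) ≤ x ↔ x ^ (-γ) ≤ y := by
  rw [one_div, ← inv_neg]
  exact rpow_inv_le_iff_of_neg hy hx (neg_lt_zero.2 hγ)

end Real

lemma add_mul_le_of_le_sub {u : ℕ → ℝ} {c : ℝ} (h : ∀ n, c ≤ u (n + 1) - u n) (n : ℕ) :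
    u 0 + c * n ≤ u n := by
  induction n with
  | zero => simp
  | succ n ih => push_cast; linarith [h n]

lemma le_add_mul_of_sub_le {u : ℕ → ℝ} {K : ℝ} (h : ∀ n, u (n + 1) - u n ≤ K) (n : ℕ) :
    u n ≤ u 0 + K * n := by
  induction n with
  | zero => simp
  | succ n ih => push_cast; linarith [h n]

/-- Asymptotics rₙ ≍ n^(−1/γ). -/
theorem stmt_5 (γ : ℝ) (hγ : 0 < γ) (r : ℕ → ℝ) (h0 : r 0 = 1)
    (hrec : ∀ n, r (n + 1) ∈ Set.Ioo 0 (r n) ∧ r (n + 1) + r (n + 1) ^ (1 + γ) = r n) :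
    ∃ C : ℝ, 1 < C ∧ ∀ n : ℕ, 1 ≤ n →
      C⁻¹ * (n : ℝ) ^ (-(1 / γ)) ≤ r n ∧ r n ≤ C * (n : ℝ) ^ (-(1 / γ)) := by
  have hpos : ∀ n, 0 < r n := by
    rintro (_ | n)
    · simp [h0]
    · exact (hrec n).1.1
  have hle_one : ∀ n, r n ≤ 1 := by
    intro n
    induction n with
    | zero => rw [h0]
    | succ n ih => exact (hrec n).1.2.le.trans ih
  set c := γ / (2 * (1 + γ))
  have hc : 0 < c := by positivity
  have hincr : ∀ n, r (n + 1) ^ (-γ) - r n ^ (-γ) ∈ Set.Icc c γ := fun n => by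
    rw [← (hrec n).2]
    exact rpow_neg_sub_rpow_neg_add_rpow_one_add_mem hγ.le (hpos (n + 1)) (hle_one (n + 1))
  refine ⟨max (c ^ (-(1 / γ))) ((1 + γ) ^ (1 / γ)),
    lt_max_of_lt_right (one_lt_rpow (by linarith) (by positivity)), fun n hn_nat => ?_⟩
  have hn : (1 : ℝ) ≤ n := by exact_mod_cast hn_nat
  have hlower := add_mul_le_of_le_sub (u := fun n => r n ^ (-γ)) (fun n => (hincr n).1) n
  have hupper := le_add_mul_of_sub_le (u := fun n => r n ^ (-γ)) (fun n => (hincr n).2) n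
  simp only [h0, one_rpow] at hlower hupper
  constructor
  · calc (max (c ^ (-(1 / γ))) ((1 + γ) ^ (1 / γ)))⁻¹ * (n : ℝ) ^ (-(1 / γ))
        ≤ ((1 + γ) ^ (1 / γ))⁻¹ * (n : ℝ) ^ (-(1 / γ)) := by
          gcongr; exact le_max_right _ _
      _ = ((1 + γ) * n) ^ (-(1 / γ)) := by
          rw [mul_rpow (by positivity) (by positivity), rpow_neg (x := 1 + γ) (by positivity)]
      _ ≤ r n := (rpow_neg_one_div_le_iff hγ (hpos n) (by positivity)).2 (by nlinarith)
  · calc r n ≤ (c * n) ^ (-(1 / γ)) :=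
          (le_rpow_neg_one_div_iff hγ (hpos n) (by positivity)).2 (by linarith)
      _ = c ^ (-(1 / γ)) * (n : ℝ) ^ (-(1 / γ)) := mul_rpow hc.le (by positivity)
      _ ≤ _ := by gcongr; exact le_max_left _ _
end

section
/- There exists a constant C > 1 such that for all n ≥ 1, C⁻¹ n^{−1−1/γ} ≤ rₙ₋₁ − rₙ ≤ C n^{−1−1/γ}, where (rₙ) is defined by r₀ = 1 and rₙ₊₁ + rₙ₊₁^{1+γ} = rₙ with rₙ₊₁ ∈ (0, rₙ). -/
private lemma bern1 {p x : ℝ} (hp : 0 < p) (hx : 0 ≤ x) :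
    1 - p * x ≤ (1 + x) ^ (-p) := by
  have h1 : (0:ℝ) < 1 + x := by linarith
  rw [Real.rpow_def_of_pos h1]
  have h2 : Real.log (1 + x) ≤ x := by
    have := Real.log_le_sub_one_of_pos h1; linarith
  have h3 := Real.add_one_le_exp (Real.log (1 + x) * (-p))
  have h6 := mul_le_mul_of_nonneg_left h2 hp.le
  linarith

private lemma bern2 {p x : ℝ} (hp : 0 < p) (hx : 0 ≤ x) :
    1 + p * x / (1 + x) ≤ (1 + x) ^ p := by
  have h1 : (0:ℝ) < 1 + x := by linarith
  rw [Real.rpow_def_of_pos h1]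
  have h2 : x / (1 + x) ≤ Real.log (1 + x) := by
    have h4 : (0:ℝ) < 1 / (1 + x) := by positivity
    have h5 := Real.log_le_sub_one_of_pos h4
    rw [Real.log_div one_ne_zero h1.ne', Real.log_one] at h5
    have he : 1 / (1 + x) - 1 = -(x / (1 + x)) := by field_simp; ring
    rw [he] at h5
    linarith
  have h3 := Real.add_one_le_exp (Real.log (1 + x) * p)
  have h6 := mul_le_mul_of_nonneg_right h2 hp.le
  have h7 : p * x / (1 + x) = x / (1 + x) * p := by ring
  linarith

/-- N^{-p} - (N+1)^{-p} ≤ p · N^{-p-1} -/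
private lemma ineqA {p : ℝ} (hp : 0 < p) {N : ℝ} (hN : 1 ≤ N) :
    N ^ (-p) - (N + 1) ^ (-p) ≤ p * N ^ (-p - 1) := by
  have hN0 : (0:ℝ) < N := by linarith
  have hsplit : (N + 1) ^ (-p) = N ^ (-p) * (1 + 1 / N) ^ (-p) := by
    rw [← Real.mul_rpow hN0.le (by positivity)]
    congr 1; field_simp
  have hb := bern1 hp (by positivity : (0:ℝ) ≤ 1 / N)
  have hNp : (0:ℝ) < N ^ (-p) := Real.rpow_pos_of_pos hN0 _
  have hpow : N ^ (-p - 1) = N ^ (-p) * N⁻¹ := by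
    rw [show (-p - 1 : ℝ) = -p + (-1) from by ring, Real.rpow_add hN0, Real.rpow_neg_one]
  rw [hsplit, hpow]
  have hmul : N ^ (-p) * (1 - p * (1 / N)) ≤ N ^ (-p) * (1 + 1 / N) ^ (-p) :=
    mul_le_mul_of_nonneg_left hb hNp.le
  have e1 : N ^ (-p) * (1 - p * (1 / N)) = N ^ (-p) - p * (N ^ (-p) * N⁻¹) := by
    rw [one_div]; ring
  linarith

/-- p · (N+1)^{-p-1} ≤ N^{-p} - (N+1)^{-p} -/
private lemma ineqB {p : ℝ} (hp : 0 < p) {N : ℝ} (hN : 1 ≤ N) :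
    p * (N + 1) ^ (-p - 1) ≤ N ^ (-p) - (N + 1) ^ (-p) := by
  have hN0 : (0:ℝ) < N := by linarith
  have hN1 : (0:ℝ) < N + 1 := by linarith
  have hsplit : N ^ (-p) = (N + 1) ^ (-p) * (1 + 1 / N) ^ p := by
    have h1 : (N + 1) ^ (-p) = N ^ (-p) * (1 + 1 / N) ^ (-p) := by
      rw [← Real.mul_rpow hN0.le (by positivity)]
      congr 1; field_simp
    have h2 : (0:ℝ) < 1 + 1 / N := by positivity
    rw [h1, mul_assoc, ← Real.rpow_add h2, neg_add_cancel, Real.rpow_zero, mul_one]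
  have hb := bern2 hp (by positivity : (0:ℝ) ≤ 1 / N)
  have hNp : (0:ℝ) < (N + 1) ^ (-p) := Real.rpow_pos_of_pos hN1 _
  have hfrac : (1 / N) / (1 + 1 / N) = 1 / (N + 1) := by
    rw [div_eq_div_iff (by positivity) (by positivity)]
    field_simp
  have hpow : (N + 1) ^ (-p - 1) = (N + 1) ^ (-p) * (N + 1)⁻¹ := by
    rw [show (-p - 1 : ℝ) = -p + (-1) from by ring, Real.rpow_add hN1, Real.rpow_neg_one]
  rw [hsplit, hpow]
  have hmul : (N + 1) ^ (-p) * (1 + p * (1 / N) / (1 + 1 / N))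
      ≤ (N + 1) ^ (-p) * (1 + 1 / N) ^ p :=
    mul_le_mul_of_nonneg_left hb hNp.le
  have e0 : p * (1 / N) / (1 + 1 / N) = p * ((1 / N) / (1 + 1 / N)) := by ring
  rw [e0, hfrac] at hmul
  have e1 : (N + 1) ^ (-p) * (1 + p * (1 / (N + 1)))
      = (N + 1) ^ (-p) + p * ((N + 1) ^ (-p) * (N + 1)⁻¹) := by
    rw [one_div]; ring
  linarith

set_option maxHeartbeats 1000000 in
/-- Asymptotics rₙ₋₁ − rₙ ≍ n^(−1−1/γ). -/
theorem stmt_6 (γ : ℝ) (hγ : 0 < γ) (r : ℕ → ℝ) (h0 : r 0 = 1)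
    (hrec : ∀ n, r (n + 1) ∈ Set.Ioo 0 (r n) ∧ r (n + 1) + r (n + 1) ^ (1 + γ) = r n) :
    ∃ C : ℝ, 1 < C ∧ ∀ n : ℕ, 1 ≤ n →
      C⁻¹ * (n : ℝ) ^ (-1 - 1 / γ) ≤ r (n - 1) - r n ∧
      r (n - 1) - r n ≤ C * (n : ℝ) ^ (-1 - 1 / γ) := by
  set p : ℝ := 1 / γ with hpdef
  have hp : 0 < p := by rw [hpdef]; positivity
  have hpγ : p * γ = 1 := by rw [hpdef]; field_simp
  have hrpos : ∀ n, 0 < r n := by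
    intro n
    cases n with
    | zero => rw [h0]; norm_num
    | succ m => exact (hrec m).1.1
  have hr1lt : r 1 < 1 := h0 ▸ (hrec 0).1.2
  have hr1half : 1 / 2 < r 1 := by
    have h := (hrec 0).2
    rw [h0] at h
    have : r 1 ^ (1 + γ) < r 1 := by
      nth_rewrite 2 [show r 1 = r 1 ^ (1:ℝ) from (Real.rpow_one _).symm]
      exact Real.rpow_lt_rpow_of_exponent_gt (hrpos 1) hr1lt (by linarith)
    linarith
  -- constants
  set C : ℝ := max 1 ((p * 2 ^ (p + 1)) ^ p) with hCdef
  have hC1 : 1 ≤ C := le_max_left _ _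
  have hC0 : 0 < C := lt_of_lt_of_le one_pos hC1
  have hCγ : p * 2 ^ (p + 1) ≤ C ^ γ := by
    have hbase : (0:ℝ) < p * 2 ^ (p + 1) := by positivity
    calc p * 2 ^ (p + 1) = ((p * 2 ^ (p + 1)) ^ p) ^ γ := by
          rw [← Real.rpow_mul hbase.le, hpdef, one_div_mul_cancel hγ.ne', Real.rpow_one]
      _ ≤ C ^ γ := Real.rpow_le_rpow (by positivity) (le_max_right _ _) hγ.le
  set c : ℝ := min (1 / 2) (p ^ p) with hcdef
  have hc0 : 0 < c := lt_min (by norm_num) (by positivity)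
  have hchalf : c ≤ 1 / 2 := min_le_left _ _
  have hcγ : c ^ γ ≤ p := by
    calc c ^ γ ≤ (p ^ p) ^ γ := Real.rpow_le_rpow hc0.le (min_le_right _ _) hγ.le
      _ = p := by
        rw [← Real.rpow_mul hp.le]
        nth_rewrite 2 [hpdef]
        rw [one_div_mul_cancel hγ.ne', Real.rpow_one]
  -- expansion helper
  have hexp : ∀ a : ℝ, 0 < a → ∀ N : ℝ, 0 < N →
      (a * N ^ (-p)) ^ (1 + γ) = a ^ (1 + γ) * N ^ (-p - 1) := by
    intro a ha N hN
    rw [Real.mul_rpow ha.le (Real.rpow_pos_of_pos hN _).le, ← Real.rpow_mul hN.le]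
    congr 2
    have h : -p * (1 + γ) = -p - p * γ := by ring
    rw [h, hpγ]
  -- upper bound on r n
  have hU : ∀ n : ℕ, 1 ≤ n → r n ≤ C * (n : ℝ) ^ (-p) := by
    intro n hn
    induction n with
    | zero => omega
    | succ m ih =>
      rcases Nat.lt_or_ge m 1 with hm | hm
      · interval_cases m
        have h1 : ((0 + 1 : ℕ) : ℝ) = 1 := by norm_num
        rw [h1, Real.one_rpow, mul_one]
        linarith
      · have ihm := ih hm
        by_contra hcon
        push_neg at hcon
        have hM1 : (1:ℝ) ≤ (m : ℝ) := Nat.one_le_cast.mpr hm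
        set M : ℝ := (m : ℝ) with hMdef
        have hM0 : (0:ℝ) < M := by linarith
        have hcast : ((m + 1 : ℕ) : ℝ) = M + 1 := by push_cast; rw [hMdef]
        rw [hcast] at hcon
        have hbnd : C * (M + 1) ^ (-p) < r (m + 1) := hcon
        have hCN : (0:ℝ) < C * (M + 1) ^ (-p) := by positivity
        have hpow : (C * (M + 1) ^ (-p)) ^ (1 + γ) ≤ r (m + 1) ^ (1 + γ) :=
          Real.rpow_le_rpow hCN.le hbnd.le (by linarith)
        have heq := (hrec m).2
        have hkey : C * M ^ (-p) < r m := by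
          have hA := ineqA hp hM1
          have h2M : M + 1 ≤ 2 * M := by linarith
          have hanti : (2 * M) ^ (-p - 1) ≤ (M + 1) ^ (-p - 1) :=
            Real.rpow_le_rpow_of_nonpos (by linarith) h2M (by linarith)
          have h2split : (2 * M) ^ (-p - 1) = 2 ^ (-p - 1) * M ^ (-p - 1) :=
            Real.mul_rpow (by norm_num) hM0.le
          have h2inv : (2:ℝ) ^ (p + 1) * 2 ^ (-p - 1) = 1 := by
            rw [← Real.rpow_add (by norm_num : (0:ℝ) < 2)]
            norm_num
          have hMle : M ^ (-p - 1) ≤ 2 ^ (p + 1) * (M + 1) ^ (-p - 1) := by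
            calc M ^ (-p - 1) = 2 ^ (p + 1) * (2 ^ (-p - 1) * M ^ (-p - 1)) := by
                  rw [← mul_assoc, h2inv, one_mul]
              _ = 2 ^ (p + 1) * (2 * M) ^ (-p - 1) := by rw [h2split]
              _ ≤ 2 ^ (p + 1) * (M + 1) ^ (-p - 1) :=
                  mul_le_mul_of_nonneg_left hanti (by positivity)
          have hdiff : M ^ (-p) - (M + 1) ^ (-p) ≤ C ^ γ * (M + 1) ^ (-p - 1) := by
            calc M ^ (-p) - (M + 1) ^ (-p) ≤ p * M ^ (-p - 1) := hA
              _ ≤ p * (2 ^ (p + 1) * (M + 1) ^ (-p - 1)) :=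
                  mul_le_mul_of_nonneg_left hMle hp.le
              _ = (p * 2 ^ (p + 1)) * (M + 1) ^ (-p - 1) := by ring
              _ ≤ C ^ γ * (M + 1) ^ (-p - 1) :=
                  mul_le_mul_of_nonneg_right hCγ (by positivity)
          have hCC : C * C ^ γ = C ^ (1 + γ) := by
            rw [Real.rpow_add hC0, Real.rpow_one]
          have hstep : C * M ^ (-p) ≤ C * (M + 1) ^ (-p) + (C * (M + 1) ^ (-p)) ^ (1 + γ) := by
            rw [hexp C hC0 (M + 1) (by linarith)]
            have hmm := mul_le_mul_of_nonneg_left hdiff hC0.le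
            have e2 : C * (M ^ (-p) - (M + 1) ^ (-p)) = C * M ^ (-p) - C * (M + 1) ^ (-p) := by
              ring
            have e3 : C * (C ^ γ * (M + 1) ^ (-p - 1)) = C ^ (1 + γ) * (M + 1) ^ (-p - 1) := by
              rw [← hCC]; ring
            linarith
          calc C * M ^ (-p) ≤ C * (M + 1) ^ (-p) + (C * (M + 1) ^ (-p)) ^ (1 + γ) := hstep
            _ < r (m + 1) + r (m + 1) ^ (1 + γ) := by linarith
            _ = r m := heq
        linarith
  -- lower bound on r n
  have hL : ∀ n : ℕ, 1 ≤ n → c * (n : ℝ) ^ (-p) ≤ r n := by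
    intro n hn
    induction n with
    | zero => omega
    | succ m ih =>
      rcases Nat.lt_or_ge m 1 with hm | hm
      · interval_cases m
        have h1 : ((0 + 1 : ℕ) : ℝ) = 1 := by norm_num
        rw [h1, Real.one_rpow, mul_one]
        linarith
      · have ihm := ih hm
        by_contra hcon
        push_neg at hcon
        have hM1 : (1:ℝ) ≤ (m : ℝ) := Nat.one_le_cast.mpr hm
        set M : ℝ := (m : ℝ) with hMdef
        have hM0 : (0:ℝ) < M := by linarith
        have hcast : ((m + 1 : ℕ) : ℝ) = M + 1 := by push_cast; rw [hMdef]
        rw [hcast] at hcon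
        have hbnd : r (m + 1) < c * (M + 1) ^ (-p) := hcon
        have hpow : r (m + 1) ^ (1 + γ) ≤ (c * (M + 1) ^ (-p)) ^ (1 + γ) :=
          Real.rpow_le_rpow (hrpos _).le hbnd.le (by linarith)
        have heq := (hrec m).2
        have hkey : r m < c * M ^ (-p) := by
          have hB := ineqB hp hM1
          have hdiff : c ^ γ * (M + 1) ^ (-p - 1) ≤ M ^ (-p) - (M + 1) ^ (-p) := by
            calc c ^ γ * (M + 1) ^ (-p - 1) ≤ p * (M + 1) ^ (-p - 1) :=
                  mul_le_mul_of_nonneg_right hcγ (by positivity)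
              _ ≤ M ^ (-p) - (M + 1) ^ (-p) := hB
          have hcc : c * c ^ γ = c ^ (1 + γ) := by
            rw [Real.rpow_add hc0, Real.rpow_one]
          have hstep : c * (M + 1) ^ (-p) + (c * (M + 1) ^ (-p)) ^ (1 + γ) ≤ c * M ^ (-p) := by
            rw [hexp c hc0 (M + 1) (by linarith)]
            have hmm := mul_le_mul_of_nonneg_left hdiff hc0.le
            have e2 : c * (M ^ (-p) - (M + 1) ^ (-p)) = c * M ^ (-p) - c * (M + 1) ^ (-p) := by
              ring
            have e3 : c * (c ^ γ * (M + 1) ^ (-p - 1)) = c ^ (1 + γ) * (M + 1) ^ (-p - 1) := by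
              rw [← hcc]; ring
            linarith
          calc r m = r (m + 1) + r (m + 1) ^ (1 + γ) := heq.symm
            _ < c * (M + 1) ^ (-p) + (c * (M + 1) ^ (-p)) ^ (1 + γ) := by linarith
            _ ≤ c * M ^ (-p) := hstep
        linarith
  -- assemble
  have hcγ1 : (0:ℝ) < c ^ (1 + γ) := Real.rpow_pos_of_pos hc0 _
  have hCγ1 : (0:ℝ) < C ^ (1 + γ) := Real.rpow_pos_of_pos hC0 _
  refine ⟨C ^ (1 + γ) + (c ^ (1 + γ))⁻¹ + 1, by linarith [hCγ1, inv_pos.mpr hcγ1], ?_⟩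
  intro n hn
  have hN1 : (1:ℝ) ≤ (n : ℝ) := Nat.one_le_cast.mpr hn
  set N : ℝ := (n : ℝ) with hNdef
  have hN0 : (0:ℝ) < N := by linarith
  have hsub : n - 1 + 1 = n := by omega
  have heq : r (n - 1) - r n = r n ^ (1 + γ) := by
    have h := (hrec (n - 1)).2
    rw [hsub] at h
    linarith
  have hexpo : (-p - 1 : ℝ) = -1 - p := by ring
  have hlowN : c ^ (1 + γ) * N ^ (-1 - p) ≤ r n ^ (1 + γ) := by
    have h1 := hL n hn
    have h2 : (c * N ^ (-p)) ^ (1 + γ) ≤ r n ^ (1 + γ) :=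
      Real.rpow_le_rpow (mul_nonneg hc0.le (Real.rpow_pos_of_pos hN0 _).le) h1 (by linarith)
    rwa [hexp c hc0 N hN0, hexpo] at h2
  have hupN : r n ^ (1 + γ) ≤ C ^ (1 + γ) * N ^ (-1 - p) := by
    have h1 := hU n hn
    have h2 : r n ^ (1 + γ) ≤ (C * N ^ (-p)) ^ (1 + γ) :=
      Real.rpow_le_rpow (hrpos n).le h1 (by linarith)
    rwa [hexp C hC0 N hN0, hexpo] at h2
  have hNpow : (0:ℝ) < N ^ (-1 - p) := Real.rpow_pos_of_pos hN0 _
  constructor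
  · rw [heq]
    have hinv : (C ^ (1 + γ) + (c ^ (1 + γ))⁻¹ + 1)⁻¹ ≤ c ^ (1 + γ) := by
      have hi : (0:ℝ) < (c ^ (1 + γ))⁻¹ := inv_pos.mpr hcγ1
      calc (C ^ (1 + γ) + (c ^ (1 + γ))⁻¹ + 1)⁻¹ ≤ ((c ^ (1 + γ))⁻¹)⁻¹ :=
            inv_anti₀ hi (by linarith)
        _ = c ^ (1 + γ) := inv_inv _
    calc (C ^ (1 + γ) + (c ^ (1 + γ))⁻¹ + 1)⁻¹ * N ^ (-1 - p)
        ≤ c ^ (1 + γ) * N ^ (-1 - p) := mul_le_mul_of_nonneg_right hinv hNpow.le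
      _ ≤ r n ^ (1 + γ) := hlowN
  · rw [heq]
    calc r n ^ (1 + γ) ≤ C ^ (1 + γ) * N ^ (-1 - p) := hupN
      _ ≤ (C ^ (1 + γ) + (c ^ (1 + γ))⁻¹ + 1) * N ^ (-1 - p) :=
          mul_le_mul_of_nonneg_right (by linarith [inv_pos.mpr hcγ1]) hNpow.le
end

section
/- In the Markov hierarchy setting, if a closed interval B is commensurate with generation n ≥ 2, then there is a unique element of G_{n−2} that properly contains B. -/
/-- A Markov hierarchy of closed nondegenerate intervals in `[r₁, 1]`, modeling the
basic-interval structure of the induced Manneville–Pomeau map.  A member of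
generation `n` is recorded by its pair of endpoints `p = (p.1, p.2)`. -/
structure MarkovHierarchy (r₁ : ℝ) where
  /-- the set of (endpoint pairs of) basic intervals of generation `n` -/
  G : ℕ → Set (ℝ × ℝ)
  nondeg : ∀ n, ∀ p ∈ G n, p.1 < p.2
  sub : ∀ n, ∀ p ∈ G n, Set.Icc p.1 p.2 ⊆ Set.Icc r₁ 1
  /-- (i) intervals of the same generation have disjoint interiors -/
  disjInt : ∀ n, ∀ p ∈ G n, ∀ q ∈ G n, p ≠ q →
    Set.Ioo p.1 p.2 ∩ Set.Ioo q.1 q.2 = ∅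
  /-- basic intervals of distinct generations are nested or have disjoint interiors -/
  nested : ∀ m n, m < n → ∀ p ∈ G m, ∀ q ∈ G n,
    Set.Icc q.1 q.2 ⊆ Set.Icc p.1 p.2 ∨ Set.Ioo p.1 p.2 ∩ Set.Ioo q.1 q.2 = ∅
  /-- (ii) each interval of generation `n+1` is contained in exactly one interval of
  generation `n` -/
  parent : ∀ n, ∀ p ∈ G (n + 1), ∃! q, q ∈ G n ∧ Set.Icc p.1 p.2 ⊆ Set.Icc q.1 q.2
  /-- (iii) the union of each generation is dense in `[r₁, 1]` -/
  dense_union : ∀ n, Set.Icc r₁ 1 ⊆ closure (⋃ p ∈ G n, Set.Icc p.1 p.2)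
  /-- every basic interval has a left-adjacent interval of the same generation -/
  leftAdj : ∀ n, ∀ p ∈ G n, r₁ < p.1 → ∃ q ∈ G n, q.2 = p.1
  /-- every basic interval has a right-adjacent interval of the same generation -/
  rightAdj : ∀ n, ∀ p ∈ G n, p.2 < 1 → ∃ q ∈ G n, q.1 = p.2
  /-- (iv) just to the right of any left endpoint of generation `n` there lie
  infinitely many intervals of each generation `m > n` -/
  infMany : ∀ n, ∀ p ∈ G n, ∀ ε : ℝ, 0 < ε → ∀ m, n < m →
    {q | q ∈ G m ∧ Set.Icc q.1 q.2 ⊆ Set.Ioo p.1 (p.1 + ε)}.Infinite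

/-- The interval `B` is commensurate with generation `n` (`n ≥ 1`): it contains a
member of `Gₙ` but no member of `Gₙ₋₁`. -/
def MarkovHierarchy.cwg {r₁ : ℝ} (H : MarkovHierarchy r₁) (B : Set ℝ) (n : ℕ) : Prop :=
  (∃ p ∈ H.G n, Set.Icc p.1 p.2 ⊆ B) ∧ ¬∃ p ∈ H.G (n - 1), Set.Icc p.1 p.2 ⊆ B

/-!
Take `p ∈ G n` inside `B = [a, b]` and its ancestor `q ∈ G (n-2)`. Just to the right of any
left endpoint of generation `n - 2` lie members of `G (n-1)`, and `B` contains none of them,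
so no left endpoint of generation `n - 2` lies in `[a, b)`. Applied to `q` this gives
`q.1 < a`, and applied to the right neighbour of `q` it gives `b ≤ q.2`. Two members of one
generation containing `B` share interior points, hence coincide.
-/

namespace MarkovHierarchy

variable {r₁ : ℝ} (H : MarkovHierarchy r₁)

theorem exists_ancestor {m n : ℕ} (hmn : m ≤ n) {p : ℝ × ℝ} (hp : p ∈ H.G n) :
    ∃ q ∈ H.G m, Set.Icc p.1 p.2 ⊆ Set.Icc q.1 q.2 := by
  induction n, hmn using Nat.le_induction generalizing p with
  | base => exact ⟨p, hp, subset_rfl⟩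
  | succ n _ ih =>
    obtain ⟨p', ⟨hp', hpp'⟩, -⟩ := H.parent n p hp
    obtain ⟨q, hq, hp'q⟩ := ih hp'
    exact ⟨q, hq, hpp'.trans hp'q⟩

theorem left_mem_Icc {n : ℕ} {p : ℝ × ℝ} (hp : p ∈ H.G n) : p.1 ∈ Set.Icc p.1 p.2 :=
  Set.left_mem_Icc.mpr (H.nondeg n p hp).le

theorem right_mem_Icc {n : ℕ} {p : ℝ × ℝ} (hp : p ∈ H.G n) : p.2 ∈ Set.Icc p.1 p.2 :=
  Set.right_mem_Icc.mpr (H.nondeg n p hp).le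

theorem left_notMem_Ico {k m : ℕ} (hkm : k < m) {q : ℝ × ℝ} (hq : q ∈ H.G k) {a b : ℝ}
    (hB : ¬∃ r ∈ H.G m, Set.Icc r.1 r.2 ⊆ Set.Icc a b) : q.1 ∉ Set.Ico a b := by
  rintro ⟨haq, hqb⟩
  obtain ⟨r, hr, hrq⟩ := (H.infMany k q hq (b - q.1) (by linarith) m hkm).nonempty
  refine hB ⟨r, hr, fun x hx => ?_⟩
  obtain ⟨hqx, hxb⟩ := hrq hx
  exact ⟨by linarith, by linarith⟩

theorem eq_of_Icc_subset {k : ℕ} {p q : ℝ × ℝ} (hp : p ∈ H.G k) (hq : q ∈ H.G k) {a b : ℝ}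
    (hab : a < b) (hBp : Set.Icc a b ⊆ Set.Icc p.1 p.2) (hBq : Set.Icc a b ⊆ Set.Icc q.1 q.2) :
    p = q := by
  by_contra hne
  have hsub : ∀ {s : ℝ × ℝ}, Set.Icc a b ⊆ Set.Icc s.1 s.2 → Set.Ioo a b ⊆ Set.Ioo s.1 s.2 :=
    fun h => Set.Ioo_subset_Ioo ((Set.Icc_subset_Icc_iff hab.le).mp h).1
      ((Set.Icc_subset_Icc_iff hab.le).mp h).2
  obtain ⟨x, hx⟩ := Set.nonempty_Ioo.mpr hab
  have hx' : x ∈ Set.Ioo p.1 p.2 ∩ Set.Ioo q.1 q.2 := ⟨hsub hBp hx, hsub hBq hx⟩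
  rwa [H.disjInt k p hp q hq hne] at hx'

end MarkovHierarchy

theorem stmt_16_general (r₁ : ℝ) (H : MarkovHierarchy r₁)
    (a b : ℝ) (hab : a < b) (hb : b ≤ 1)
    (n : ℕ) (hn : 2 ≤ n) (hcwg : H.cwg (Set.Icc a b) n) :
    ∃! q, q ∈ H.G (n - 2) ∧ Set.Icc a b ⊂ Set.Icc q.1 q.2 := by
  obtain ⟨k, rfl⟩ : ∃ k, n = k + 2 := ⟨n - 2, by omega⟩
  obtain ⟨⟨p, hp, hpB⟩, hB⟩ := hcwg
  obtain ⟨q, hq, hpq⟩ := H.exists_ancestor (Nat.le_add_right k 2) hp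
  have hap := (hpB (H.left_mem_Icc hp)).1
  have hpb := (hpB (H.right_mem_Icc hp)).2
  have hqp := (hpq (H.left_mem_Icc hp)).1
  have hpq2 := (hpq (H.right_mem_Icc hp)).2
  have hp12 := H.nondeg _ p hp
  have hqa : q.1 < a := by
    by_contra! haq
    exact H.left_notMem_Ico k.lt_succ_self hq hB ⟨haq, by linarith⟩
  have hbq : b ≤ q.2 := by
    by_contra! hqb
    obtain ⟨q', hq', hq'q⟩ := H.rightAdj k q hq (by linarith)
    exact H.left_notMem_Ico k.lt_succ_self hq' hB ⟨by linarith, by linarith⟩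
  have hBq : Set.Icc a b ⊂ Set.Icc q.1 q.2 := Set.Icc_ssubset_Icc_left (by linarith) hqa hbq
  exact ⟨q, ⟨hq, hBq⟩, fun q' ⟨hq', hBq'⟩ => H.eq_of_Icc_subset hq' hq hab hBq'.1 hBq.1⟩

/-- If a closed interval `B` is commensurate with generation `n ≥ 2`, then there is a
unique element of `G (n-2)` properly containing `B`. -/
theorem stmt_16 (r₁ : ℝ) (hr₁ : r₁ < 1) (H : MarkovHierarchy r₁)
    (a b : ℝ) (ha : r₁ ≤ a) (hab : a < b) (hb : b ≤ 1)
    (n : ℕ) (hn : 2 ≤ n) (hcwg : H.cwg (Set.Icc a b) n) :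
    ∃! q, q ∈ H.G (n - 2) ∧ Set.Icc a b ⊂ Set.Icc q.1 q.2 :=
  stmt_16_general r₁ H a b hab hb n hn hcwg
end

section
/- In the Markov hierarchy setting, if a closed interval B is commensurate with generation n, then B contains at most one left endpoint of generation at most n−1; moreover if B contains a left endpoint of generation k < n−1, that left endpoint must equal the right endpoint of B. -/
/-!
A left endpoint `p.1` of generation `k < n - 1` lying in `B = [a, b]` with `p.1 < b` would, by
the accumulation property (iv), have a whole interval of generation `n - 1` inside `[p.1, b]`,
which commensurability forbids. So two left endpoints `x < y` of generation `≤ n - 1` in `B`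
can only occur with `x = p.1` for some `p ∈ Gₙ₋₁`; as `p ⊄ B`, `p` sticks out past `b ≥ y`,
and then `y` is a left endpoint of generation `≤ n - 1` inside the interior of `p`, which
the nesting and disjointness axioms rule out.
-/

namespace MarkovHierarchy

variable {r₁ : ℝ} (H : MarkovHierarchy r₁)

theorem left_eq_right_of_not_contains {a b : ℝ} {k m : ℕ} (hkm : k < m)
    (hno : ¬∃ q ∈ H.G m, Set.Icc q.1 q.2 ⊆ Set.Icc a b) {p : ℝ × ℝ} (hp : p ∈ H.G k)
    (hpB : p.1 ∈ Set.Icc a b) : p.1 = b := by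
  by_contra hne
  have hlt : p.1 < b := lt_of_le_of_ne hpB.2 hne
  obtain ⟨q, hq, hqsub⟩ := (H.infMany k p hp (b - p.1) (by linarith) m hkm).nonempty
  refine hno ⟨q, hq, fun t ht => ?_⟩
  obtain ⟨h₁, h₂⟩ := hqsub ht
  exact ⟨hpB.1.trans h₁.le, by linarith⟩

theorem left_notMem_Ioo {k m : ℕ} (hkm : k ≤ m) {p q : ℝ × ℝ} (hp : p ∈ H.G m)
    (hq : q ∈ H.G k) : q.1 ∉ Set.Ioo p.1 p.2 := by
  rintro ⟨h₁, h₂⟩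
  have hoverlap : (Set.Ioo p.1 p.2 ∩ Set.Ioo q.1 q.2).Nonempty := by
    rw [Set.Ioo_inter_Ioo, Set.nonempty_Ioo, max_eq_right h₁.le]
    exact lt_min h₂ (H.nondeg k q hq)
  rcases hkm.lt_or_eq with hlt | rfl
  · rcases H.nested k m hlt q hq p hp with hsub | hdisj
    · have := (hsub (Set.left_mem_Icc.mpr (H.nondeg m p hp).le)).1
      linarith
    · rw [Set.inter_comm] at hdisj
      exact hoverlap.ne_empty hdisj
  · have hpq : p ≠ q := by rintro rfl; exact h₁.false
    exact hoverlap.ne_empty (H.disjInt k p hp q hq hpq)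

theorem not_lt_left_of_not_contains {a b : ℝ} {m k l : ℕ}
    (hno : ¬∃ q ∈ H.G m, Set.Icc q.1 q.2 ⊆ Set.Icc a b) (hk : k ≤ m) (hl : l ≤ m)
    {p q : ℝ × ℝ} (hp : p ∈ H.G k) (hq : q ∈ H.G l)
    (hpB : p.1 ∈ Set.Icc a b) (hqB : q.1 ∈ Set.Icc a b) : ¬p.1 < q.1 := by
  intro hpq
  rcases hk.lt_or_eq with hlt | rfl
  · exact (H.left_eq_right_of_not_contains hlt hno hp hpB).not_lt (hpq.trans_le hqB.2)
  · have hbp : b < p.2 := by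
      by_contra! hpb
      exact hno ⟨p, hp, Set.Icc_subset_Icc hpB.1 hpb⟩
    exact H.left_notMem_Ioo hl hp hq ⟨hpq, hqB.2.trans_lt hbp⟩

end MarkovHierarchy

theorem stmt_17_general (r₁ : ℝ) (H : MarkovHierarchy r₁)
    (a b : ℝ)
    (n : ℕ) (hcwg : H.cwg (Set.Icc a b) n) :
    {x | x ∈ Set.Icc a b ∧ ∃ m ≤ n - 1, ∃ p ∈ H.G m, p.1 = x}.Subsingleton ∧
    (∀ k, k < n - 1 → ∀ p ∈ H.G k, p.1 ∈ Set.Icc a b → p.1 = b) := by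
  have hno := hcwg.2
  refine ⟨?_, fun k hk p hp hpB => H.left_eq_right_of_not_contains hk hno hp hpB⟩
  rintro _ ⟨hxB, k, hk, p, hp, rfl⟩ _ ⟨hyB, l, hl, q, hq, rfl⟩
  exact le_antisymm (not_lt.1 (H.not_lt_left_of_not_contains hno hl hk hq hp hyB hxB))
    (not_lt.1 (H.not_lt_left_of_not_contains hno hk hl hp hq hxB hyB))

/-- If a closed interval `B = [a,b]` is commensurate with generation `n`, then `B`
contains at most one left endpoint of generation at most `n-1`; moreover any left
endpoint of generation `k < n-1` contained in `B` equals the right endpoint of `B`. -/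
theorem stmt_17 (r₁ : ℝ) (hr₁ : r₁ < 1) (H : MarkovHierarchy r₁)
    (a b : ℝ) (ha : r₁ ≤ a) (hab : a < b) (hb : b ≤ 1)
    (n : ℕ) (hn : 1 ≤ n) (hcwg : H.cwg (Set.Icc a b) n) :
    {x | x ∈ Set.Icc a b ∧ ∃ m ≤ n - 1, ∃ p ∈ H.G m, p.1 = x}.Subsingleton ∧
    (∀ k, k < n - 1 → ∀ p ∈ H.G k, p.1 ∈ Set.Icc a b → p.1 = b) :=
  stmt_17_general r₁ H a b n hcwg
end
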